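/- Let X be a geodesic δ-hyperbolic metric space, let G be a group that is not virtually cyclic acting on X by isometries with a unital axial WPD loxodromic element f ∈ G, let x₀ ∈ Ax(f), and let w ∈ G be an element with w² ∉ EC(f). Then there exists D₀ > 0 such that the following holds for every integer D > D₀: if A ⊆ X is a finite set contained in X \ H_half(x₀, f^D x₀) and N = #A, then there exist a₁, …, a_N ∈ {f^D, w f^D} such that (1) the halfspace H := H_half(f^D a₁⋯a_N x₀, f^D a₁⋯a_N f^D x₀) contains A, and (2) H and f^D a₁⋯a_N · f^D · w · f^{−D} · a_N^{−1}⋯a₁^{−1} f^{−D} · H are disjoint. -/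

import Mathlib

noncomputable section

open Set Metric Pointwise

/-- The Gromov product `(y|z)_x`. -/
def gromovProd {X : Type*} [MetricSpace X] (x y z : X) : ℝ :=
  (dist x y + dist x z - dist y z) / 2

/-- `γ` restricted to `[a, b]` is a unit-speed geodesic. -/
def IsGeodesicParam {X : Type*} [MetricSpace X] (γ : ℝ → X) (a b : ℝ) : Prop :=
  ∀ s ∈ Set.Icc a b, ∀ t ∈ Set.Icc a b, dist (γ s) (γ t) = |s - t|

/-- `γ` is a geodesic from `x` to `y`, parametrized by arclength on `[0, dist x y]`. -/
def IsGeodesicBetween {X : Type*} [MetricSpace X] (γ : ℝ → X) (x y : X) : Prop :=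
  γ 0 = x ∧ γ (dist x y) = y ∧ IsGeodesicParam γ 0 (dist x y)

/-- A geodesic metric space: any two points are joined by a geodesic. -/
def GeodesicSpace (X : Type*) [MetricSpace X] : Prop :=
  ∀ x y : X, ∃ γ : ℝ → X, IsGeodesicBetween γ x y

/-- A geodesic space in which every geodesic triangle is `δ`-thin. -/
def GromovHyperbolic (X : Type*) [MetricSpace X] (δ : ℝ) : Prop :=
  GeodesicSpace X ∧
    ∀ (x y z : X) (γ₁ γ₂ γ₃ : ℝ → X),
      IsGeodesicBetween γ₁ x z → IsGeodesicBetween γ₂ x y → IsGeodesicBetween γ₃ y z →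
        ∀ t ∈ Set.Icc (0 : ℝ) (dist x z),
          ∃ u ∈ γ₂ '' Set.Icc (0 : ℝ) (dist x y) ∪ γ₃ '' Set.Icc (0 : ℝ) (dist y z),
            dist (γ₁ t) u ≤ δ

/-- A subset of `X` which is the image of a geodesic segment. -/
def IsGeodesicSegSet {X : Type*} [MetricSpace X] (A : Set X) : Prop :=
  ∃ (γ : ℝ → X) (a b : ℝ), a ≤ b ∧ IsGeodesicParam γ a b ∧ A = γ '' Set.Icc a b

/-- The set of nearest-point projections of `x` to `A`. -/
def nearestPts {X : Type*} [MetricSpace X] (A : Set X) (x : X) : Set X :=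
  {a ∈ A | dist x a = Metric.infDist x A}

/-- The nearest-point projection of the set `B` to `A`. -/
def projSet {X : Type*} [MetricSpace X] (A B : Set X) : Set X := ⋃ x ∈ B, nearestPts A x

/-- `diam_A(B)`, the diameter of the projection of `B` to `A`. -/
def projDiam {X : Type*} [MetricSpace X] (A B : Set X) : ℝ := Metric.diam (projSet A B)

/-- `d_A(B, C) = diam (π_A (B ∪ C))`. -/
def projDist {X : Type*} [MetricSpace X] (A B C : Set X) : ℝ := Metric.diam (projSet A (B ∪ C))

/-- The halfspace `H_half(x, y)` of points at least as close to `x` as to `y`. -/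
def halfspace {X : Type*} [MetricSpace X] (x y : X) : Set X := {z | dist z x ≤ dist z y}

/-- A group is virtually cyclic if it has a cyclic subgroup of finite index. -/
def VirtuallyCyclic (G : Type*) [Group G] : Prop :=
  ∃ H : Subgroup G, H.FiniteIndex ∧ IsCyclic H

/-- The WPD property for `f` relative to the basepoint `x₀`. -/
def WPD {G : Type*} [Group G] {X : Type*} [MetricSpace X] [MulAction G X]
    (f : G) (x₀ : X) : Prop :=
  ∀ R : ℝ, 0 < R → ∃ L : ℕ, 0 < L ∧
    {g : G | dist x₀ (g • x₀) < R ∧ dist ((f ^ L) • x₀) ((g * f ^ L) • x₀) < R}.Finite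

/-- The word norm with respect to the generating set `S`. -/
def wordNorm {G : Type*} [Group G] (S : Finset G) (g : G) : ℕ :=
  sInf {n : ℕ | ∃ l : List G, l.length = n ∧ (∀ x ∈ l, x ∈ S ∨ x⁻¹ ∈ S) ∧ l.prod = g}

/-- The word metric with respect to the generating set `S`. -/
def wordDist {G : Type*} [Group G] (S : Finset G) (g h : G) : ℕ := wordNorm S (g⁻¹ * h)

/-- `B` is an `r`-roughly branching subset of `G`. -/
def RoughlyBranching {G : Type*} [Group G] (S : Finset G) (r : ℝ) (B : Set G) : Prop :=
  ∃ B' : Set G,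
    (∀ b ∈ B, ∃ b' ∈ B', (wordDist S b b' : ℝ) ≤ r) ∧
    ∀ k : ℕ, 1 ≤ k → ∀ g h : Fin k → G, (∀ i, g i ∈ B') → (∀ i, h i ∈ B') →
      (List.ofFn g).prod = (List.ofFn h).prod → g = h

/-- The elementary closure of `f`. -/
def elemClosure {G : Type*} [Group G] (f : G) : Set G :=
  {g : G | ∃ n : ℕ, 0 < n ∧ (g * f ^ n * g⁻¹ = f ^ n ∨ g * f ^ n * g⁻¹ = (f ^ n)⁻¹)}

section GPLemmas

variable {X : Type*} [MetricSpace X]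

lemma gp_comm (x y z : X) : gromovProd x y z = gromovProd x z y := by
  unfold gromovProd; rw [dist_comm y z]; ring

lemma gp_nonneg (x y z : X) : 0 ≤ gromovProd x y z := by
  have h := dist_triangle y x z
  unfold gromovProd
  rw [dist_comm y x] at h
  linarith

lemma gp_le_left (x y z : X) : gromovProd x y z ≤ dist x y := by
  have h := dist_triangle x y z
  unfold gromovProd
  linarith

lemma gp_le_right (x y z : X) : gromovProd x y z ≤ dist x z := by
  have h := dist_triangle x z y
  unfold gromovProd
  rw [dist_comm z y] at h
  linarith

lemma gp_add (x y z : X) : gromovProd x y z + gromovProd y x z = dist x y := by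
  unfold gromovProd; rw [dist_comm y x]; ring

lemma gp_base (p q x y : X) : gromovProd q x y - dist p q ≤ gromovProd p x y := by
  have h1 := dist_triangle q p x
  have h2 := dist_triangle q p y
  unfold gromovProd
  rw [dist_comm q p] at h1 h2
  linarith

lemma gp_arg (p x x' y : X) : gromovProd p x y ≤ gromovProd p x' y + dist x x' := by
  have h1 := dist_triangle p x' x
  have h2 := dist_triangle x' x y
  unfold gromovProd
  rw [dist_comm x' x] at h1 h2
  linarith

lemma dist_eq_gp (x y z : X) : dist y z = dist x y + dist x z - 2 * gromovProd x y z := by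
  unfold gromovProd; ring

lemma gp_smul {G : Type*} [Group G] [MulAction G X]
    (hiso : ∀ (g : G) (x y : X), dist (g • x) (g • y) = dist x y) (g : G) (x y z : X) :
    gromovProd (g • x) (g • y) (g • z) = gromovProd x y z := by
  unfold gromovProd; rw [hiso, hiso, hiso]

lemma geo_dist_left {γ : ℝ → X} {x y : X} (h : IsGeodesicBetween γ x y) {t : ℝ}
    (ht : t ∈ Set.Icc 0 (dist x y)) : dist x (γ t) = t := by
  have h0 : (0:ℝ) ∈ Set.Icc 0 (dist x y) := ⟨le_refl _, ht.1.trans ht.2⟩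
  have he := h.2.2 0 h0 t ht
  rw [h.1] at he
  rw [he, zero_sub, abs_neg, abs_of_nonneg ht.1]

lemma geo_dist_right {γ : ℝ → X} {x y : X} (h : IsGeodesicBetween γ x y) {t : ℝ}
    (ht : t ∈ Set.Icc 0 (dist x y)) : dist y (γ t) = dist x y - t := by
  have h0 : dist x y ∈ Set.Icc 0 (dist x y) := ⟨dist_nonneg, le_refl _⟩
  have he := h.2.2 (dist x y) h0 t ht
  rw [h.2.1] at he
  rw [he, abs_of_nonneg (by linarith [ht.2])]

lemma hyp_delta_nonneg {δ : ℝ} (hX : GromovHyperbolic X δ) (x : X) : 0 ≤ δ := by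
  have hgb : IsGeodesicBetween (fun _ : ℝ => x) x x := by
    refine ⟨rfl, rfl, ?_⟩
    intro s hs t ht
    rw [dist_self] at hs ht
    have hs0 : s = 0 := le_antisymm hs.2 hs.1
    have ht0 : t = 0 := le_antisymm ht.2 ht.1
    simp [hs0, ht0]
  obtain ⟨u, hu, hd⟩ := hX.2 x x x _ _ _ hgb hgb hgb 0
    (by rw [dist_self]; exact ⟨le_refl _, le_refl _⟩)
  rcases hu with hu | hu <;> obtain ⟨a, -, rfl⟩ := hu <;> simpa using hd

lemma four_point {δ : ℝ} (hX : GromovHyperbolic X δ) (p x y z : X) :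
    min (gromovProd p x z) (gromovProd p z y) ≤ gromovProd p x y + 3*δ := by
  obtain ⟨γ, hγ⟩ := hX.1 x y
  set t₀ := gromovProd x p y with ht₀def
  have ht₀ : t₀ ∈ Set.Icc 0 (dist x y) := ⟨gp_nonneg _ _ _, gp_le_right x p y⟩
  have hxγ : dist x (γ t₀) = t₀ := geo_dist_left hγ ht₀
  have hyγ : dist y (γ t₀) = dist x y - t₀ := geo_dist_right hγ ht₀
  have hcxp : dist p x = dist x p := dist_comm p x
  have hcyp : dist p y = dist y p := dist_comm p y
  -- Fact B : dist p (γ t₀) ≤ gromovProd p x y + 2δ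
  have hB : dist p (γ t₀) ≤ gromovProd p x y + 2*δ := by
    obtain ⟨σ, hσ⟩ := hX.1 x p
    obtain ⟨τ, hτ⟩ := hX.1 p y
    obtain ⟨u, hu, hdu⟩ := hX.2 x p y γ σ τ hγ hσ hτ t₀ ht₀
    rcases hu with hu | hu
    · obtain ⟨s, hs, rfl⟩ := hu
      have h1 : dist x (σ s) = s := geo_dist_left hσ hs
      have h2 : dist p (σ s) = dist x p - s := geo_dist_right hσ hs
      have h3 : dist x (γ t₀) ≤ dist x (σ s) + dist (σ s) (γ t₀) := dist_triangle _ _ _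
      have h4 : dist (σ s) (γ t₀) = dist (γ t₀) (σ s) := dist_comm _ _
      have h5 : dist p (γ t₀) ≤ dist p (σ s) + dist (σ s) (γ t₀) := dist_triangle _ _ _
      unfold gromovProd at ht₀def
      unfold gromovProd
      linarith [dist_comm y p, hcxp, hcyp]
    · obtain ⟨s, hs, rfl⟩ := hu
      have h1 : dist p (τ s) = s := geo_dist_left hτ hs
      have h2 : dist y (τ s) = dist p y - s := geo_dist_right hτ hs
      have h3 : dist y (γ t₀) ≤ dist y (τ s) + dist (τ s) (γ t₀) := dist_triangle _ _ _
      have h4 : dist (τ s) (γ t₀) = dist (γ t₀) (τ s) := dist_comm _ _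
      have h5 : dist p (γ t₀) ≤ dist p (τ s) + dist (τ s) (γ t₀) := dist_triangle _ _ _
      unfold gromovProd at ht₀def
      unfold gromovProd
      linarith [dist_comm y p, hcxp, hcyp]
  unfold gromovProd at hB
  -- thin triangle (x, z, y): side x→y close to [x,z] ∪ [z,y]
  obtain ⟨σ, hσ⟩ := hX.1 x z
  obtain ⟨τ, hτ⟩ := hX.1 z y
  obtain ⟨u, hu, hdu⟩ := hX.2 x z y γ σ τ hγ hσ hτ t₀ ht₀
  rcases hu with hu | hu
  · obtain ⟨s, hs, rfl⟩ := hu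
    have h1 : dist x (σ s) = s := geo_dist_left hσ hs
    have h2 : dist z (σ s) = dist x z - s := geo_dist_right hσ hs
    have h6 : dist p x ≤ dist p (σ s) + dist x (σ s) := by
      have := dist_triangle p (σ s) x
      rw [dist_comm (σ s) x] at this; linarith
    have h7 : dist p z ≤ dist p (σ s) + dist z (σ s) := by
      have := dist_triangle p (σ s) z
      rw [dist_comm (σ s) z] at this; linarith
    have h8 : dist p (σ s) ≤ dist p (γ t₀) + dist (γ t₀) (σ s) := dist_triangle _ _ _
    have hmin : gromovProd p x z ≤ gromovProd p x y + 3*δ := by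
      unfold gromovProd
      linarith [hB, hdu, h6, h7, h8]
    exact le_trans (min_le_left _ _) hmin
  · obtain ⟨s, hs, rfl⟩ := hu
    have h1 : dist z (τ s) = s := geo_dist_left hτ hs
    have h2 : dist y (τ s) = dist z y - s := geo_dist_right hτ hs
    have h6 : dist p z ≤ dist p (τ s) + dist z (τ s) := by
      have := dist_triangle p (τ s) z
      rw [dist_comm (τ s) z] at this; linarith
    have h7 : dist p y ≤ dist p (τ s) + dist y (τ s) := by
      have := dist_triangle p (τ s) y
      rw [dist_comm (τ s) y] at this; linarith
    have h8 : dist p (τ s) ≤ dist p (γ t₀) + dist (γ t₀) (τ s) := dist_triangle _ _ _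
    have hmin : gromovProd p z y ≤ gromovProd p x y + 3*δ := by
      unfold gromovProd
      linarith [hB, hdu, h6, h7, h8, dist_comm z y]
    exact le_trans (min_le_right _ _) hmin

end GPLemmas
section Master

variable {X : Type*} [MetricSpace X] {G : Type*} [Group G] [MulAction G X]

lemma master_bound
    (hiso : ∀ (g : G) (x y : X), dist (g • x) (g • y) = dist x y)
    (f : G) (x₀ : X)
    (haxd : ∀ m n : ℤ, dist ((f ^ m) • x₀) ((f ^ n) • x₀) = |(m : ℝ) - n|)
    (hwpd : WPD f x₀)
    (δ₁ : ℝ) (hδ₁ : 0 ≤ δ₁)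
    (h4 : ∀ p x y z : X, min (gromovProd p x z) (gromovProd p z y) ≤ gromovProd p x y + δ₁)
    (u : G) (ε ε' : ℤ) (hε : ε = 1 ∨ ε = -1) (hε' : ε' = 1 ∨ ε' = -1)
    (hu : ∀ d : ℤ, 0 < d → u * f ^ (ε' * d) * u⁻¹ ≠ f ^ (ε * d)) :
    ∃ K, 0 ≤ K ∧ ∀ D : ℤ, 0 ≤ D →
      gromovProd x₀ ((f ^ (ε * D)) • x₀) ((u * f ^ (ε' * D)) • x₀) ≤ K := by
  by_cases hbdd : ∃ K, ∀ D : ℤ, 0 ≤ D →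
      gromovProd x₀ ((f ^ (ε * D)) • x₀) ((u * f ^ (ε' * D)) • x₀) ≤ K
  · obtain ⟨K, hK⟩ := hbdd
    exact ⟨max K 0, le_max_right _ _, fun D hD => le_trans (hK D hD) (le_max_left _ _)⟩
  exfalso
  push_neg at hbdd
  set C := dist x₀ (u • x₀) with hCdef
  have hC0 : 0 ≤ C := dist_nonneg
  set E := 3*C + 4*δ₁ with hEdef
  have hE0 : 0 ≤ E := by rw [hEdef]; linarith
  have hεsq : ε * ε = 1 := by rcases hε with rfl | rfl <;> norm_num
  have hε'sq : ε' * ε' = 1 := by rcases hε' with rfl | rfl <;> norm_num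
  have hd0 : ∀ n : ℤ, dist x₀ ((f ^ n) • x₀) = |(n : ℝ)| := by
    intro n
    have h := haxd 0 n
    simpa using h
  have hmove : ∀ (g : G) (x y : X), dist x (g • y) = dist (g⁻¹ • x) y := by
    intro g x y
    have h := hiso g⁻¹ x (g • y)
    rw [inv_smul_smul] at h
    exact h.symm
  have hdiag : ∀ (e : ℤ), (e = 1 ∨ e = -1) → ∀ a : ℤ, 0 ≤ a →
      dist x₀ ((f ^ (e * a)) • x₀) = (a : ℝ) := by
    intro e he a ha
    rw [hd0]
    have h1 : ((e*a : ℤ) : ℝ) = (e : ℝ) * (a : ℝ) := by push_cast; ring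
    have he1 : |(e : ℝ)| = 1 := by rcases he with rfl | rfl <;> norm_num
    rw [h1, abs_mul, he1, one_mul, abs_of_nonneg (by exact_mod_cast ha)]
  have habs : ∀ (e : ℤ), (e = 1 ∨ e = -1) → ∀ a b : ℤ, a ≤ b →
      dist ((f ^ (e * a)) • x₀) ((f ^ (e * b)) • x₀) = (b : ℝ) - a := by
    intro e he a b hab
    rw [haxd]
    have he1 : |(e : ℝ)| = 1 := by rcases he with rfl | rfl <;> norm_num
    have h1 : ((e*a : ℤ) : ℝ) - ((e*b : ℤ) : ℝ) = (e : ℝ) * ((a : ℝ) - (b : ℝ)) := by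
      push_cast; ring
    rw [h1, abs_mul, he1, one_mul, abs_sub_comm,
      abs_of_nonneg (sub_nonneg.mpr (by exact_mod_cast hab))]
  have hgpax : ∀ (e : ℤ), (e = 1 ∨ e = -1) → ∀ a b : ℤ, 0 ≤ a → a ≤ b →
      gromovProd x₀ ((f ^ (e * a)) • x₀) ((f ^ (e * b)) • x₀) = (a : ℝ) := by
    intro e he a b ha hab
    unfold gromovProd
    rw [hdiag e he a ha, hdiag e he b (le_trans ha hab), habs e he a b hab]
    ring
  -- Step M1 : uniform fellow traveling
  have M1 : ∀ m : ℤ, 0 ≤ m → dist ((f ^ (ε * m)) • x₀) ((u * f ^ (ε' * m)) • x₀) ≤ E := by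
    intro m hm
    obtain ⟨D, hD0, hbig⟩ := hbdd ((m : ℝ) + C + 1)
    have hdD : dist x₀ ((f ^ (ε*D)) • x₀) = (D : ℝ) := hdiag ε hε D hD0
    have hgpD := gp_le_left x₀ ((f ^ (ε * D)) • x₀) ((u * f ^ (ε' * D)) • x₀)
    rw [hdD] at hgpD
    have hmD : m ≤ D := by
      have h : (m : ℝ) < (D : ℝ) := by linarith
      exact_mod_cast h.le
    have p1 : gromovProd x₀ ((f ^ (ε*m)) • x₀) ((f ^ (ε*D)) • x₀) = (m : ℝ) :=
      hgpax ε hε m D hm hmD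
    have hbm : (u * f ^ (ε' * m)) • x₀ = u • ((f ^ (ε'*m)) • x₀) := mul_smul _ _ _
    have hbD : (u * f ^ (ε' * D)) • x₀ = u • ((f ^ (ε'*D)) • x₀) := mul_smul _ _ _
    have p2 : (m : ℝ) - C ≤ gromovProd x₀ ((u * f ^ (ε'*D)) • x₀) ((u * f ^ (ε'*m)) • x₀) := by
      have h1 : gromovProd (u • x₀) ((u * f ^ (ε'*D)) • x₀) ((u * f ^ (ε'*m)) • x₀) = (m : ℝ) := by
        rw [hbm, hbD, gp_smul hiso, gp_comm]
        exact hgpax ε' hε' m D hm hmD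
      have h2 := gp_base x₀ (u • x₀) ((u * f ^ (ε'*D)) • x₀) ((u * f ^ (ε'*m)) • x₀)
      rw [h1] at h2
      linarith
    have q1 : (m : ℝ) - C - δ₁ ≤ gromovProd x₀ ((f ^ (ε*D)) • x₀) ((u * f ^ (ε'*m)) • x₀) := by
      have h := h4 x₀ ((f ^ (ε*D)) • x₀) ((u * f ^ (ε'*m)) • x₀) ((u * f ^ (ε'*D)) • x₀)
      have hA : (m : ℝ) - C ≤ gromovProd x₀ ((f ^ (ε*D)) • x₀) ((u * f ^ (ε'*D)) • x₀) := by
        linarith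
      have hmin := le_min hA p2
      linarith [hmin.trans h]
    have q2 : (m : ℝ) - C - 2*δ₁ ≤ gromovProd x₀ ((f ^ (ε*m)) • x₀) ((u * f ^ (ε'*m)) • x₀) := by
      have h := h4 x₀ ((f ^ (ε*m)) • x₀) ((u * f ^ (ε'*m)) • x₀) ((f ^ (ε*D)) • x₀)
      have hA : (m : ℝ) - C - δ₁ ≤ gromovProd x₀ ((f ^ (ε*m)) • x₀) ((f ^ (ε*D)) • x₀) := by
        rw [p1]; linarith
      have hmin := le_min hA q1
      linarith [hmin.trans h]
    have hdam : dist x₀ ((f ^ (ε*m)) • x₀) = (m : ℝ) := hdiag ε hε m hm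
    have hdbm : dist x₀ ((u * f ^ (ε'*m)) • x₀) ≤ C + (m : ℝ) := by
      rw [hbm]
      have h1 := dist_triangle x₀ (u • x₀) (u • ((f ^ (ε'*m)) • x₀))
      rw [hiso u x₀ ((f ^ (ε'*m)) • x₀)] at h1
      have h2 : dist x₀ ((f ^ (ε'*m)) • x₀) = (m : ℝ) := hdiag ε' hε' m hm
      linarith
    have hdg := dist_eq_gp x₀ ((f ^ (ε*m)) • x₀) ((u * f ^ (ε'*m)) • x₀)
    rw [hEdef]
    linarith
  -- WPD
  obtain ⟨L, hLpos, hfin⟩ := hwpd (2*E + 1) (by linarith)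
  have hLnn : (0:ℤ) ≤ (L:ℤ) := Int.natCast_nonneg L
  set g_ : ℤ → G := fun n => f ^ (-(ε * n)) * u * f ^ (ε' * n) with hg_
  have hnpow : (f : G) ^ L = f ^ (L:ℤ) := (zpow_natCast f L).symm
  have hinvpow : ∀ n : ℤ, (f ^ (-n) : G)⁻¹ = f ^ n := by
    intro n; rw [zpow_neg, inv_inv]
  have hg1 : ∀ n : ℤ, 0 ≤ n → dist x₀ ((g_ n) • x₀) ≤ E := by
    intro n hn
    have h1 : (g_ n) • x₀ = f ^ (-(ε * n)) • ((u * f ^ (ε' * n)) • x₀) := by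
      rw [hg_]
      simp only []
      rw [mul_assoc, mul_smul]
    rw [h1, hmove, hinvpow]
    exact M1 n hn
  have hm₁nn : ∀ n : ℤ, (L:ℤ) ≤ n → (0:ℤ) ≤ n + ε' * L := by
    intro n hn
    rcases hε' with rfl | rfl
    · linarith
    · linarith
  have hkey2 : ∀ n : ℤ, (L:ℤ) ≤ n →
      dist ((f ^ (ε * ε' * (L:ℤ))) • x₀) ((g_ n * f ^ (L:ℤ)) • x₀) ≤ E := by
    intro n hn
    have hexpeq : ε' * (n + ε' * (L:ℤ)) = ε' * n + (L:ℤ) := by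
      rw [mul_add, ← mul_assoc, hε'sq, one_mul]
    have hexp : g_ n * f ^ (L:ℤ) = f ^ (-(ε * n)) * (u * f ^ (ε' * (n + ε' * (L:ℤ)))) := by
      rw [hexpeq, zpow_add, hg_]
      simp only []
      group
    rw [hexp, mul_smul, hmove, hinvpow, smul_smul, ← zpow_add]
    rw [show ε * n + ε * ε' * (L:ℤ) = ε * (n + ε' * (L:ℤ)) by ring]
    exact M1 (n + ε' * (L:ℤ)) (hm₁nn n hn)
  have hkey3 : ∀ n : ℤ, (L:ℤ) ≤ n →
      dist ((g_ n)⁻¹ • ((f ^ (ε * ε' * (L:ℤ))) • x₀)) ((f ^ (L:ℤ)) • x₀) ≤ E := by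
    intro n hn
    have hinv : (g_ n)⁻¹ = f ^ (-(ε' * n)) * u⁻¹ * f ^ (ε * n) := by
      rw [hg_]
      simp only []
      group
    have hpt : (g_ n)⁻¹ • ((f ^ (ε * ε' * (L:ℤ))) • x₀)
        = f ^ (-(ε' * n)) • (u⁻¹ • ((f ^ (ε * (n + ε' * (L:ℤ)))) • x₀)) := by
      rw [hinv, mul_smul, mul_smul, smul_smul (f ^ (ε * n)), ← zpow_add]
      rw [show ε * n + ε * ε' * (L:ℤ) = ε * (n + ε' * (L:ℤ)) by ring]
    rw [hpt, dist_comm, hmove, hinvpow]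
    rw [smul_smul, ← zpow_add]
    have hexpeq : ε' * n + (L:ℤ) = ε' * (n + ε' * (L:ℤ)) := by
      rw [mul_add, ← mul_assoc, hε'sq, one_mul]
    rw [hexpeq, hmove, inv_inv, ← mul_smul, dist_comm]
    exact M1 (n + ε' * (L:ℤ)) (hm₁nn n hn)
  -- the elements h k are all in the finite WPD set
  have hmem : ∀ k : ℕ, ((g_ ((L:ℤ) + k))⁻¹ * g_ (L:ℤ)) ∈
      {g : G | dist x₀ (g • x₀) < 2*E+1 ∧ dist ((f ^ L) • x₀) ((g * f ^ L) • x₀) < 2*E+1} := by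
    intro k
    have hn : (L:ℤ) ≤ (L:ℤ) + k := by linarith [Int.natCast_nonneg k]
    have hnn : (0:ℤ) ≤ (L:ℤ) + k := le_trans hLnn hn
    constructor
    · have h1 : ((g_ ((L:ℤ)+k))⁻¹ * g_ (L:ℤ)) • x₀ = (g_ ((L:ℤ)+k))⁻¹ • ((g_ (L:ℤ)) • x₀) :=
        mul_smul _ _ _
      have h2 := dist_triangle x₀ ((g_ ((L:ℤ)+k))⁻¹ • x₀)
        ((g_ ((L:ℤ)+k))⁻¹ • ((g_ (L:ℤ)) • x₀))
      rw [hiso] at h2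
      have h3 : dist x₀ ((g_ ((L:ℤ)+k))⁻¹ • x₀) = dist ((g_ ((L:ℤ)+k)) • x₀) x₀ := by
        rw [hmove, inv_inv]
      rw [h3] at h2
      rw [h1]
      have h4' := hg1 ((L:ℤ)+k) hnn
      have h5 := hg1 (L:ℤ) hLnn
      rw [dist_comm] at h4'
      linarith [h2]
    · have e1 : ((g_ ((L:ℤ)+k))⁻¹ * g_ (L:ℤ) * f ^ L) • x₀
          = (g_ ((L:ℤ)+k))⁻¹ • ((g_ (L:ℤ) * f ^ (L:ℤ)) • x₀) := by
        rw [hnpow, mul_assoc, mul_smul]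
      have t1 := dist_triangle ((f ^ (L:ℤ)) • x₀)
        ((g_ ((L:ℤ)+k))⁻¹ • ((f ^ (ε * ε' * (L:ℤ))) • x₀))
        ((g_ ((L:ℤ)+k))⁻¹ • ((g_ (L:ℤ) * f ^ (L:ℤ)) • x₀))
      have t2 : dist ((g_ ((L:ℤ)+k))⁻¹ • ((f ^ (ε * ε' * (L:ℤ))) • x₀))
          ((g_ ((L:ℤ)+k))⁻¹ • ((g_ (L:ℤ) * f ^ (L:ℤ)) • x₀))
          = dist ((f ^ (ε * ε' * (L:ℤ))) • x₀) ((g_ (L:ℤ) * f ^ (L:ℤ)) • x₀) := hiso _ _ _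
      have t3 := hkey3 ((L:ℤ)+k) hn
      have t4 := hkey2 (L:ℤ) (le_refl _)
      rw [e1, hnpow]
      rw [t2] at t1
      linarith [t1, t3, t4,
        dist_comm ((f ^ (L:ℤ)) • x₀) ((g_ ((L:ℤ)+k))⁻¹ • ((f ^ (ε * ε' * (L:ℤ))) • x₀))]
  have hcol := Set.infinite_univ.exists_ne_map_eq_of_mapsTo
    (f := fun k : ℕ => (g_ ((L:ℤ) + k))⁻¹ * g_ (L:ℤ)) (fun k _ => hmem k) hfin
  obtain ⟨k₁, -, k₂, -, hkne, hkeq⟩ := hcol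
  have hgeq : g_ ((L:ℤ) + k₁) = g_ ((L:ℤ) + k₂) := by
    have h := mul_right_cancel hkeq
    exact inv_injective h
  have hfinal : ∀ n₁ n₂ : ℤ, n₂ < n₁ → g_ n₁ = g_ n₂ → False := by
    intro n₁ n₂ hlt heq
    have hd0' : 0 < n₁ - n₂ := sub_pos.mpr hlt
    apply hu (n₁ - n₂) hd0'
    simp only [hg_] at heq
    have h2 : u * f ^ (ε' * (n₁ - n₂)) = f ^ (ε * (n₁ - n₂)) * u := by
      have h3 := congrArg (fun x => f ^ (ε * n₁) * x * f ^ (-(ε' * n₂))) heq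
      calc u * f ^ (ε' * (n₁ - n₂))
          = f ^ (ε * n₁) * (f ^ (-(ε * n₁)) * u * f ^ (ε' * n₁)) * f ^ (-(ε' * n₂)) := by
            rw [show ε' * (n₁ - n₂) = ε' * n₁ + -(ε' * n₂) by ring, zpow_add]
            group
      _ = f ^ (ε * n₁) * (f ^ (-(ε * n₂)) * u * f ^ (ε' * n₂)) * f ^ (-(ε' * n₂)) := by
            rw [h3]
      _ = f ^ (ε * (n₁ - n₂)) * u := by
            rw [show ε * (n₁ - n₂) = ε * n₁ + -(ε * n₂) by ring, zpow_add]
            group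
    rw [h2, mul_inv_cancel_right]
  rcases (Ne.lt_or_gt hkne) with hlt | hlt
  · refine hfinal ((L:ℤ) + k₂) ((L:ℤ) + k₁) ?_ hgeq.symm
    have h : (k₁:ℤ) < (k₂:ℤ) := by exact_mod_cast hlt
    linarith
  · refine hfinal ((L:ℤ) + k₁) ((L:ℤ) + k₂) ?_ hgeq
    have h : (k₂:ℤ) < (k₁:ℤ) := by exact_mod_cast hlt
    linarith
end Master
set_option maxHeartbeats 2000000 in
/-- **Pigeonhole lemma for halfspaces** (Lemma 5.10 of the paper). -/
theorem pigeonhole_halfspaces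
    {X : Type*} [MetricSpace X] {G : Type*} [Group G] [MulAction G X]
    (δ : ℝ) (hX : GromovHyperbolic X δ)
    (hiso : ∀ (g : G) (x y : X), dist (g • x) (g • y) = dist x y)
    (hnvc : ¬ VirtuallyCyclic G)
    (f : G) (ℓ : ℝ → X) (hgeo : ∀ s t : ℝ, dist (ℓ s) (ℓ t) = |s - t|)
    (haxis : ∀ t : ℝ, f • ℓ t = ℓ (t + 1))
    (x₀ : X) (hx₀ : x₀ ∈ Set.range ℓ) (hwpd : WPD f x₀)
    (w : G) (hw : w ^ 2 ∉ elemClosure f) :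
    ∃ D₀ : ℝ, 0 < D₀ ∧ ∀ D : ℤ, D₀ < (D : ℝ) →
      ∀ A : Finset X, (∀ x ∈ A, x ∉ halfspace x₀ ((f ^ D) • x₀)) →
        ∃ a : Fin A.card → G, (∀ i, a i = f ^ D ∨ a i = w * f ^ D) ∧
          (A : Set X) ⊆ halfspace ((f ^ D * (List.ofFn a).prod) • x₀)
              ((f ^ D * (List.ofFn a).prod * f ^ D) • x₀) ∧
          Disjoint
            (halfspace ((f ^ D * (List.ofFn a).prod) • x₀)
              ((f ^ D * (List.ofFn a).prod * f ^ D) • x₀))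
            ((f ^ D * (List.ofFn a).prod * f ^ D * w * f ^ (-D) *
                ((List.ofFn a).prod)⁻¹ * f ^ (-D)) •
              halfspace ((f ^ D * (List.ofFn a).prod) • x₀)
                ((f ^ D * (List.ofFn a).prod * f ^ D) • x₀)) := by
  classical
  obtain ⟨t₀, ht₀⟩ := hx₀
  -- axis facts
  have hneg : ∀ t : ℝ, f⁻¹ • ℓ t = ℓ (t - 1) := by
    intro t
    have h := haxis (t - 1)
    rw [sub_add_cancel] at h
    rw [← h, inv_smul_smul]
  have axis : ∀ (n : ℤ) (t : ℝ), (f ^ n) • ℓ t = ℓ (t + n) := by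
    intro n
    induction n using Int.induction_on with
    | zero => intro t; simp
    | succ k ih =>
        intro t
        have h1 : (f : G) ^ ((k : ℤ) + 1) = f ^ (k : ℤ) * f := zpow_add_one f k
        rw [h1, mul_smul, haxis, ih]
        congr 1
        push_cast
        ring
    | pred k ih =>
        intro t
        have h1 : (f : G) ^ (-(k : ℤ) - 1) = f ^ (-(k : ℤ)) * f⁻¹ := zpow_sub_one f (-(k : ℤ))
        rw [h1, mul_smul, hneg, ih]
        congr 1
        push_cast
        ring
  have haxd : ∀ m n : ℤ, dist ((f ^ m) • x₀) ((f ^ n) • x₀) = |(m : ℝ) - n| := by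
    intro m n
    rw [← ht₀, axis, axis, hgeo]
    congr 1
    ring
  have hmove : ∀ (g : G) (x y : X), dist x (g • y) = dist (g⁻¹ • x) y := by
    intro g x y
    have h := hiso g⁻¹ x (g • y)
    rw [inv_smul_smul] at h
    exact h.symm
  have hd0' : ∀ n : ℤ, dist x₀ ((f ^ n) • x₀) = |(n : ℝ)| := fun n => by
    simpa using haxd 0 n
  -- hyperbolicity
  have hδ : 0 ≤ δ := hyp_delta_nonneg hX x₀
  have h4 : ∀ p x y z : X, min (gromovProd p x z) (gromovProd p z y) ≤ gromovProd p x y + 3*δ :=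
    four_point hX
  set δ₁ := 3*δ with hδ₁def
  have hδ₁ : 0 ≤ δ₁ := by rw [hδ₁def]; linarith
  -- consequences of w² ∉ EC(f)
  have hwmem : ∀ d : ℤ, 0 < d → w * f ^ d * w⁻¹ ≠ f ^ d ∧ w * f ^ d * w⁻¹ ≠ f ^ (-d) := by
    intro d hd
    have hdd : (f : G) ^ (d.toNat) = f ^ d := by
      rw [← zpow_natCast, Int.toNat_of_nonneg hd.le]
    constructor
    · intro h
      apply hw
      refine ⟨d.toNat, by omega, Or.inl ?_⟩
      rw [hdd]
      calc w^2 * f ^ d * (w^2)⁻¹ = w * (w * f ^ d * w⁻¹) * w⁻¹ := by rw [pow_two]; group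
      _ = w * f ^ d * w⁻¹ := by conv_lhs => rw [h]
      _ = f ^ d := h
    · intro h
      apply hw
      refine ⟨d.toNat, by omega, Or.inl ?_⟩
      rw [hdd]
      have h2 : w * f ^ (-d) * w⁻¹ = f ^ d := by
        have h3 : (w * f ^ d * w⁻¹)⁻¹ = ((f : G) ^ (-d))⁻¹ := by rw [h]
        rw [show (w * f ^ d * w⁻¹)⁻¹ = w * f ^ (-d) * w⁻¹ from by group,
          show ((f : G) ^ (-d))⁻¹ = f ^ d from by group] at h3
        exact h3
      calc w^2 * f ^ d * (w^2)⁻¹ = w * (w * f ^ d * w⁻¹) * w⁻¹ := by rw [pow_two]; group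
      _ = w * f ^ (-d) * w⁻¹ := by conv_lhs => rw [h]
      _ = f ^ d := h2
  have hu₁ : ∀ d : ℤ, 0 < d → w * f ^ ((1:ℤ) * d) * w⁻¹ ≠ f ^ ((1:ℤ) * d) := by
    intro d hd
    simp only [one_mul]
    exact (hwmem d hd).1
  have hu₂ : ∀ d : ℤ, 0 < d → w * f ^ ((1:ℤ) * d) * w⁻¹ ≠ f ^ ((-1:ℤ) * d) := by
    intro d hd
    rw [one_mul, neg_one_mul]
    exact (hwmem d hd).2
  have hu₄ : ∀ d : ℤ, 0 < d → w⁻¹ * f ^ ((-1:ℤ) * d) * (w⁻¹)⁻¹ ≠ f ^ ((-1:ℤ) * d) := by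
    intro d hd h
    rw [inv_inv, neg_one_mul] at h
    apply (hwmem d hd).1
    have h3 : w * (w⁻¹ * f ^ (-d) * w) * w⁻¹ = w * f ^ (-d) * w⁻¹ := by rw [h]
    rw [show w * (w⁻¹ * f ^ (-d) * w) * w⁻¹ = f ^ (-d) from by group] at h3
    have h4' : ((f : G) ^ (-d))⁻¹ = (w * f ^ (-d) * w⁻¹)⁻¹ := congrArg Inv.inv h3
    rw [show ((f : G) ^ (-d))⁻¹ = f ^ d from by group,
      show (w * f ^ (-d) * w⁻¹)⁻¹ = w * f ^ d * w⁻¹ from by group] at h4'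
    exact h4'.symm
  -- master bounds
  obtain ⟨K₁, hK₁0, hK₁⟩ := master_bound hiso f x₀ haxd hwpd δ₁ hδ₁ h4 w 1 1
    (Or.inl rfl) (Or.inl rfl) hu₁
  obtain ⟨K₂, hK₂0, hK₂⟩ := master_bound hiso f x₀ haxd hwpd δ₁ hδ₁ h4 w (-1) 1
    (Or.inr rfl) (Or.inl rfl) hu₂
  obtain ⟨K₄, hK₄0, hK₄⟩ := master_bound hiso f x₀ haxd hwpd δ₁ hδ₁ h4 w⁻¹ (-1) (-1)
    (Or.inr rfl) (Or.inr rfl) hu₄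
  set C := dist x₀ (w • x₀) with hCdef
  have hC0 : 0 ≤ C := dist_nonneg
  set B := K₂ + C with hBdef
  have hB0 : 0 ≤ B := by rw [hBdef]; linarith
  refine ⟨2*(C + B + K₁ + K₄ + 3*δ₁) + 4, by linarith, ?_⟩
  intro D hD A hA
  have hDR : (0:ℝ) < (D:ℝ) := by linarith
  have hDz : (0:ℤ) ≤ D := by exact_mod_cast hDR.le
  have hDr' : (0:ℝ) ≤ (D:ℝ) := hDR.le
  have hfD : dist x₀ ((f ^ D) • x₀) = (D:ℝ) := by
    rw [hd0', abs_of_nonneg hDr']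
  -- letter facts
  have hwfDge : (D:ℝ) - C ≤ dist x₀ ((w * f ^ D) • x₀) := by
    have h1 := dist_triangle (w • x₀) x₀ ((w * f ^ D) • x₀)
    have h2 : dist (w • x₀) ((w * f ^ D) • x₀) = (D:ℝ) := by
      rw [mul_smul, hiso, hfD]
    rw [h2, dist_comm (w • x₀) x₀] at h1
    linarith
  have hletge : ∀ c : G, (c = f ^ D ∨ c = w * f ^ D) → (D:ℝ) - C ≤ dist x₀ (c • x₀) := by
    rintro c (rfl | rfl)
    · rw [hfD]; linarith
    · exact hwfDge
  have hwinv : dist (w⁻¹ • x₀) x₀ = C := by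
    rw [hCdef, ← hiso w (w⁻¹ • x₀) x₀, smul_inv_smul]
  have hinvC : ∀ c : G, (c = f ^ D ∨ c = w * f ^ D) → dist (c⁻¹ • x₀) ((f ^ (-D)) • x₀) ≤ C := by
    rintro c (rfl | rfl)
    · rw [show ((f : G) ^ D)⁻¹ = f ^ (-D) from by group]
      simpa using hC0
    · rw [show ((w * f ^ D : G))⁻¹ = f ^ (-D) * w⁻¹ from by group, mul_smul, hiso, hwinv]
  have hgp0 : gromovProd x₀ ((f ^ (-D)) • x₀) ((f ^ D) • x₀) = 0 := by
    unfold gromovProd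
    rw [hd0', hd0', haxd]
    push_cast
    rw [abs_of_nonneg hDr', abs_of_nonpos (by linarith : -(D:ℝ) ≤ 0),
      abs_of_nonpos (by linarith : -(D:ℝ) - (D:ℝ) ≤ 0)]
    ring
  have hK₁' : gromovProd x₀ ((f ^ D) • x₀) ((w * f ^ D) • x₀) ≤ K₁ := by
    have h := hK₁ D hDz
    rw [one_mul] at h
    exact h
  have hK₂' : gromovProd x₀ ((f ^ (-D)) • x₀) ((w * f ^ D) • x₀) ≤ K₂ := by
    have h := hK₂ D hDz
    rw [one_mul, neg_one_mul] at h
    exact h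
  have hK₄' : gromovProd x₀ ((f ^ (-D)) • x₀) ((w⁻¹ * f ^ (-D)) • x₀) ≤ K₄ := by
    have h := hK₄ D hDz
    rw [neg_one_mul] at h
    exact h
  have hJ : ∀ c c₂ : G, (c = f ^ D ∨ c = w * f ^ D) → (c₂ = f ^ D ∨ c₂ = w * f ^ D) →
      gromovProd x₀ (c⁻¹ • x₀) (c₂ • x₀) ≤ B := by
    intro c c₂ hc hc₂
    have h1 := gp_arg x₀ (c⁻¹ • x₀) ((f ^ (-D)) • x₀) (c₂ • x₀)
    have h2 := hinvC c hc
    rcases hc₂ with rfl | rfl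
    · rw [hgp0] at h1
      rw [hBdef]
      linarith
    · rw [hBdef]
      linarith [hK₂']
  -- the step lemma for peeling off a letter
  have hstep : ∀ (c : G) (t : List G) (z : X),
      (D:ℝ)/2 < gromovProd (((c :: t).prod) • x₀) ((((c :: t).prod) * f ^ D) • x₀) z →
      (D:ℝ)/2 < gromovProd ((t.prod) • x₀) (((t.prod) * f ^ D) • x₀) (c⁻¹ • z) := by
    intro c t z h
    have he : gromovProd ((t.prod) • x₀) (((t.prod) * f ^ D) • x₀) (c⁻¹ • z)
        = gromovProd (((c :: t).prod) • x₀) ((((c :: t).prod) * f ^ D) • x₀) z := by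
      rw [← gp_smul hiso c ((t.prod) • x₀) (((t.prod) * f ^ D) • x₀) (c⁻¹ • z)]
      rw [smul_inv_smul, smul_smul, smul_smul]
      simp only [List.prod_cons, mul_assoc]
    rw [he]
    exact h
  -- the shadow lemma
  have shadow : ∀ (s : List G) (c : G) (z : X), (c = f ^ D ∨ c = w * f ^ D) →
      (∀ x ∈ s, x = f ^ D ∨ x = w * f ^ D) →
      (D:ℝ)/2 < gromovProd (((c :: s).prod) • x₀) ((((c :: s).prod) * f ^ D) • x₀) z →
      (D:ℝ) - (C + B + δ₁) ≤ gromovProd x₀ (c • x₀) z := by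
    intro s
    induction s with
    | nil =>
        intro c z hc _ hz
        rw [List.prod_cons, List.prod_nil, mul_one] at hz
        have hj : gromovProd (c • x₀) x₀ ((c * f ^ D) • x₀) ≤ B := by
          have h := hJ c (f ^ D) hc (Or.inl rfl)
          rw [← gp_smul hiso c x₀ (c⁻¹ • x₀) ((f ^ D) • x₀), smul_inv_smul, smul_smul] at h
          exact h
        have h4' := h4 (c • x₀) x₀ ((c * f ^ D) • x₀) z
        have hcz : gromovProd (c • x₀) z ((c * f ^ D) • x₀)
            = gromovProd (c • x₀) ((c * f ^ D) • x₀) z := gp_comm _ _ _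
        have h5 : gromovProd (c • x₀) x₀ z ≤ B + δ₁ := by
          rcases min_le_iff.mp h4' with h | h
          · linarith
          · rw [hcz] at h
            linarith
        have h6 := gp_add x₀ (c • x₀) z
        have h7 := hletge c hc
        linarith
    | cons c₂ s' ih =>
        intro c z hc hs hz
        have hc₂ : c₂ = f ^ D ∨ c₂ = w * f ^ D := hs c₂ (List.mem_cons_self)
        have hz' := hstep c (c₂ :: s') z hz
        have hIH := ih c₂ (c⁻¹ • z) hc₂ (fun x hx => hs x (List.mem_cons_of_mem _ hx)) hz'
        have hIH' : (D:ℝ) - (C + B + δ₁) ≤ gromovProd (c • x₀) ((c * c₂) • x₀) z := by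
          have he : gromovProd (c • x₀) ((c * c₂) • x₀) z
              = gromovProd x₀ (c₂ • x₀) (c⁻¹ • z) := by
            rw [← gp_smul hiso c x₀ (c₂ • x₀) (c⁻¹ • z), smul_inv_smul, smul_smul]
          rw [he]
          exact hIH
        have hj : gromovProd (c • x₀) x₀ ((c * c₂) • x₀) ≤ B := by
          have h := hJ c c₂ hc hc₂
          rw [← gp_smul hiso c x₀ (c⁻¹ • x₀) (c₂ • x₀), smul_inv_smul, smul_smul] at h
          exact h
        have h4' := h4 (c • x₀) x₀ ((c * c₂) • x₀) z
        have hcz : gromovProd (c • x₀) z ((c * c₂) • x₀)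
            = gromovProd (c • x₀) ((c * c₂) • x₀) z := gp_comm _ _ _
        have h5 : gromovProd (c • x₀) x₀ z ≤ B + δ₁ := by
          rcases min_le_iff.mp h4' with h | h
          · linarith
          · rw [hcz] at h
            linarith
        have h6 := gp_add x₀ (c • x₀) z
        have h7 := hletge c hc
        linarith
  -- disjointness of distinct shadows
  have D2 : ∀ (l l' : List G), l ≠ [] → l.length = l'.length →
      (∀ x ∈ l, x = f ^ D ∨ x = w * f ^ D) → (∀ x ∈ l', x = f ^ D ∨ x = w * f ^ D) →
      l ≠ l' → ∀ z : X,
      (D:ℝ)/2 < gromovProd ((l.prod) • x₀) (((l.prod) * f ^ D) • x₀) z →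
      (D:ℝ)/2 < gromovProd ((l'.prod) • x₀) (((l'.prod) * f ^ D) • x₀) z → False := by
    intro l
    induction l with
    | nil => intro l' h; exact absurd rfl h
    | cons c t ih =>
        intro l' _ hlen hm hm' hne z hz hz'
        cases l' with
        | nil => simp at hlen
        | cons c' t' =>
            by_cases hcc : c = c'
            · subst hcc
              have hlen' : t.length = t'.length := by simpa using hlen
              have htt : t ≠ t' := by
                intro h
                exact hne (by rw [h])
              cases t with
              | nil =>
                  cases t' with
                  | nil => exact htt rfl
                  | cons _ _ => simp at hlen'
              | cons d u =>
                  exact ih t' (List.cons_ne_nil _ _) hlen'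
                    (fun x hx => hm x (List.mem_cons_of_mem _ hx))
                    (fun x hx => hm' x (List.mem_cons_of_mem _ hx)) htt (c⁻¹ • z)
                    (hstep c (d :: u) z hz) (hstep c t' z hz')
            · have s1 := shadow t c z (hm c (List.mem_cons_self))
                (fun x hx => hm x (List.mem_cons_of_mem _ hx)) hz
              have s2 := shadow t' c' z (hm' c' (List.mem_cons_self))
                (fun x hx => hm' x (List.mem_cons_of_mem _ hx)) hz'
              have hTK : K₁ + δ₁ < (D:ℝ) - (C + B + δ₁) := by linarith
              have h4' := h4 x₀ ((f ^ D) • x₀) ((w * f ^ D) • x₀) z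
              have hgc : gromovProd x₀ z ((w * f ^ D) • x₀)
                  = gromovProd x₀ ((w * f ^ D) • x₀) z := gp_comm _ _ _
              rcases hm c (List.mem_cons_self) with hc | hc <;>
                rcases hm' c' (List.mem_cons_self) with hc' | hc'
              · exact hcc (hc.trans hc'.symm)
              · rw [hc] at s1
                rw [hc'] at s2
                rcases min_le_iff.mp h4' with h | h
                · linarith
                · rw [hgc] at h
                  linarith
              · rw [hc] at s1
                rw [hc'] at s2
                rcases min_le_iff.mp h4' with h | h
                · linarith
                · rw [hgc] at h
                  linarith
              · exact hcc (hc.trans hc'.symm)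
  -- letters are distinct
  have hne01 : (f : G) ^ D ≠ w * f ^ D := by
    intro h
    apply hw
    refine ⟨1, one_pos, Or.inl ?_⟩
    have hw1 : w = 1 := by
      have h2 : (1 : G) * f ^ D = w * f ^ D := by rw [one_mul]; exact h
      exact (mul_right_cancel h2).symm
    rw [hw1]
    simp
  -- pigeonhole
  set N := A.card with hN
  have hexists : ∃ b : Fin N → Bool, ∀ x ∈ A, ¬ ((D:ℝ)/2 <
      gromovProd (((f ^ D :: List.ofFn (fun i => if b i then f ^ D else w * f ^ D)).prod) • x₀)
        ((((f ^ D :: List.ofFn (fun i => if b i then f ^ D else w * f ^ D)).prod) * f ^ D) • x₀)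
        x) := by
    by_contra hcon
    push_neg at hcon
    choose φ hφA hφP using hcon
    obtain ⟨b, b', hbne, hbeq⟩ := Fintype.exists_ne_map_eq_of_card_lt
      (fun b : Fin N → Bool => (⟨φ b, hφA b⟩ : {x // x ∈ A})) (by
        rw [Fintype.card_coe]
        have hcard : Fintype.card (Fin N → Bool) = 2 ^ N := by
          simp [Fintype.card_fun]
        rw [hcard]
        exact Nat.lt_two_pow_self (n := N))
    have hxeq : φ b = φ b' := congrArg Subtype.val hbeq
    have hmemb : ∀ b0 : Fin N → Bool, ∀ x ∈
        (f ^ D :: List.ofFn (fun i => if b0 i then f ^ D else w * f ^ D) : List G),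
        x = f ^ D ∨ x = w * f ^ D := by
      intro b0 x hx
      rcases List.mem_cons.mp hx with rfl | hx
      · exact Or.inl rfl
      · obtain ⟨i, hi⟩ := List.mem_ofFn.mp hx
        by_cases hbi : b0 i
        · rw [← hi]; simp [hbi]
        · rw [← hi]; simp [hbi]
    have hlne : (f ^ D :: List.ofFn (fun i => if b i then f ^ D else w * f ^ D) : List G)
        ≠ (f ^ D :: List.ofFn (fun i => if b' i then f ^ D else w * f ^ D) : List G) := by
      intro h
      apply hbne
      have h2 : List.ofFn (fun i => if b i then f ^ D else w * f ^ D)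
          = List.ofFn (fun i => if b' i then f ^ D else w * f ^ D) := by
        exact (List.cons.injEq _ _ _ _ ▸ h).2
      have h3 := List.ofFn_injective h2
      funext i
      have h5 := congrFun h3 i
      cases hbb : b i <;> cases hbb' : b' i
      · rfl
      · exfalso
        rw [hbb, hbb'] at h5
        simp at h5
        exact hne01 (by rw [h5, one_mul])
      · exfalso
        rw [hbb, hbb'] at h5
        simp at h5
        exact hne01 (by rw [h5, one_mul])
      · rfl
    exact D2 _ _ (List.cons_ne_nil _ _) (by simp) (hmemb b) (hmemb b') hlne (φ b)
      (hφP b) (hxeq ▸ hφP b')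
  obtain ⟨b, hb⟩ := hexists
  refine ⟨fun i => if b i then f ^ D else w * f ^ D,
    fun i => by by_cases hbi : b i <;> simp [hbi], ?_, ?_⟩
  · -- A is contained in the halfspace
    intro x hx
    have hxA : x ∈ A := hx
    have h := not_lt.mp (hb x hxA)
    rw [List.prod_cons] at h
    have hdg : dist ((f ^ D * (List.ofFn fun i => if b i then f ^ D else w * f ^ D).prod) • x₀)
        ((f ^ D * (List.ofFn fun i => if b i then f ^ D else w * f ^ D).prod * f ^ D) • x₀)
        = (D:ℝ) := by
      rw [mul_smul (f ^ D * (List.ofFn fun i => if b i then f ^ D else w * f ^ D).prod)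
        (f ^ D) x₀, hiso, hfD]
    unfold gromovProd at h
    rw [hdg] at h
    show dist x _ ≤ dist x _
    rw [dist_comm x, dist_comm x]
    rw [show (f ^ D * (List.ofFn fun i => if b i then f ^ D else w * f ^ D).prod * f ^ D : G)
      = (f ^ D * (List.ofFn fun i => if b i then f ^ D else w * f ^ D).prod) * f ^ D from rfl]
    linarith
  · -- disjointness
    set P : G := (List.ofFn fun i => if b i then f ^ D else w * f ^ D).prod with hP
    set gg : G := f ^ D * P with hgg
    set q : G := f ^ D * w * f ^ (-D) with hq
    have hc : f ^ D * P * f ^ D * w * f ^ (-D) * P⁻¹ * f ^ (-D) = gg * q * gg⁻¹ := by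
      rw [hgg, hq]
      group
    rw [hc, Set.disjoint_left]
    intro z hz hz2
    set z' := gg⁻¹ • z with hz'def
    have hzd : dist z (gg • x₀) ≤ dist z ((gg * f ^ D) • x₀) := hz
    have he1 : dist z (gg • x₀) = dist z' x₀ := hmove gg z x₀
    have he2 : dist z ((gg * f ^ D) • x₀) = dist z' ((f ^ D) • x₀) := by
      rw [mul_smul gg (f ^ D) x₀, hmove gg]
    have hz1' : dist z' x₀ ≤ dist z' ((f ^ D) • x₀) := by
      rw [← he1, ← he2]
      exact hzd
    rw [Set.mem_smul_set_iff_inv_smul_mem] at hz2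
    rw [show (gg * q * gg⁻¹)⁻¹ = gg * q⁻¹ * gg⁻¹ from by group] at hz2
    have hz2d : dist ((gg * q⁻¹ * gg⁻¹) • z) (gg • x₀)
        ≤ dist ((gg * q⁻¹ * gg⁻¹) • z) ((gg * f ^ D) • x₀) := hz2
    have he3 : (gg * q⁻¹ * gg⁻¹) • z = gg • (q⁻¹ • z') := by
      rw [hz'def, mul_smul, mul_smul]
    have he4 : dist (gg • (q⁻¹ • z')) (gg • x₀) = dist (q⁻¹ • z') x₀ := hiso _ _ _
    have he5 : dist (gg • (q⁻¹ • z')) ((gg * f ^ D) • x₀) = dist (q⁻¹ • z') ((f ^ D) • x₀) := by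
      rw [mul_smul gg (f ^ D) x₀, hiso gg]
    rw [he3, he4, he5] at hz2d
    have hz2' : dist z' (q • x₀) ≤ dist z' ((q * f ^ D) • x₀) := by
      rw [hmove q z' x₀, show (q * f ^ D) • x₀ = q • ((f ^ D) • x₀) from mul_smul _ _ _,
        hmove q z' ((f ^ D) • x₀)]
      exact hz2d
    -- the geometric contradiction
    have hrr' : dist ((q * f ^ D) • x₀) (q • x₀) = (D:ℝ) := by
      rw [mul_smul q (f ^ D) x₀, hiso q, dist_comm, hfD]
    have hqfD : q * f ^ D = f ^ D * w := by
      rw [hq, mul_assoc (f ^ D * w), ← zpow_add, show -D + D = 0 from by ring, zpow_zero, mul_one]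
    have hdfr : dist ((f ^ D) • x₀) ((q * f ^ D) • x₀) = C := by
      rw [hqfD, mul_smul (f ^ D) w x₀, hiso (f ^ D)]
    have hx₀r : (D:ℝ) - C ≤ dist x₀ ((q * f ^ D) • x₀) := by
      have h1 := dist_triangle x₀ ((q * f ^ D) • x₀) ((f ^ D) • x₀)
      rw [dist_comm ((q * f ^ D) • x₀) ((f ^ D) • x₀), hdfr, hfD] at h1
      linarith
    have hiii : gromovProd ((q * f ^ D) • x₀) (q • x₀) x₀ ≤ K₄ := by
      have he : gromovProd ((q * f ^ D) • x₀) (q • x₀) x₀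
          = gromovProd x₀ ((f ^ (-D)) • x₀) ((w⁻¹ * f ^ (-D)) • x₀) := by
        rw [← gp_smul hiso (f ^ D * w) x₀ ((f ^ (-D)) • x₀) ((w⁻¹ * f ^ (-D)) • x₀)]
        rw [smul_smul, smul_smul, show (f ^ D * w) * (w⁻¹ * f ^ (-D)) = (1:G) from by group,
          one_smul, show (f ^ D * w) * f ^ (-D) = q from by rw [hq], ← hqfD]
      rw [he]
      exact hK₄'
    have hi : gromovProd x₀ ((f ^ D) • x₀) z' ≤ (D:ℝ)/2 := by
      unfold gromovProd
      rw [hfD]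
      have c1 : dist x₀ z' = dist z' x₀ := dist_comm _ _
      have c2 : dist ((f ^ D) • x₀) z' = dist z' ((f ^ D) • x₀) := dist_comm _ _
      linarith
    have hii : (D:ℝ)/2 ≤ gromovProd ((q * f ^ D) • x₀) (q • x₀) z' := by
      unfold gromovProd
      rw [hrr']
      have c1 : dist (q • x₀) z' = dist z' (q • x₀) := dist_comm _ _
      have c2 : dist ((q * f ^ D) • x₀) z' = dist z' ((q * f ^ D) • x₀) := dist_comm _ _
      linarith
    have hDK₄ : K₄ + δ₁ < (D:ℝ)/2 := by linarith
    have hiv : gromovProd ((q * f ^ D) • x₀) z' x₀ ≤ K₄ + δ₁ := by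
      have h4' := h4 ((q * f ^ D) • x₀) (q • x₀) x₀ z'
      rcases min_le_iff.mp h4' with h | h
      · linarith
      · linarith
    have hv : dist x₀ ((q * f ^ D) • x₀) - (K₄ + δ₁) ≤ gromovProd x₀ ((q * f ^ D) • x₀) z' := by
      have h6 := gp_add x₀ ((q * f ^ D) • x₀) z'
      have hgc : gromovProd ((q * f ^ D) • x₀) x₀ z'
          = gromovProd ((q * f ^ D) • x₀) z' x₀ := gp_comm _ _ _
      linarith
    have hvi : (D:ℝ) - C ≤ gromovProd x₀ ((f ^ D) • x₀) ((q * f ^ D) • x₀) := by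
      unfold gromovProd
      rw [hfD, hdfr]
      linarith
    have h4'' := h4 x₀ ((f ^ D) • x₀) z' ((q * f ^ D) • x₀)
    rcases min_le_iff.mp h4'' with h | h
    · linarith
    · linarith
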